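/- Performing an end fold on an end-foldable segment of a 1D assigned crease pattern preserves the property that every suspicious interval is innocent. -/

import Mathlib

open Finset

/-- A 1D crease pattern: paper `[0, L]` with creases `c 0 < c 1 < ⋯ < c (n-1)`
strictly inside the paper. -/
structure CreasePattern1D where
  L : ℝ
  n : ℕ
  c : Fin n → ℝ
  mono : StrictMono c
  pos : ∀ i, 0 < c i
  lt_len : ∀ i, c i < L

namespace CreasePattern1D

variable (P : CreasePattern1D)

/-- The folded-state map: `f x = x` on the first segment, and the slope flips
sign at every crease (alternating reflection). -/
noncomputable def foldMap (x : ℝ) : ℝ :=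
  (-1 : ℝ) ^ ((univ.filter fun i => P.c i ≤ x)).card * x
    + 2 * ∑ i ∈ univ.filter (fun i => P.c i ≤ x), (-1 : ℝ) ^ (i : ℕ) * P.c i

/-- Vertex `j` of the pattern: `pt 0 = 0` (left end), `pt (j) = c (j-1)` for
`1 ≤ j ≤ n`, and `pt j = L` (right end) for `j ≥ n+1`. -/
noncomputable def pt (j : ℕ) : ℝ :=
  if j = 0 then 0 else if h : j - 1 < P.n then P.c ⟨j - 1, h⟩ else P.L

/-- The interval between creases `p ≤ q` is *suspicious* if the folded images of
the far endpoints of its two flaps both lie strictly outside the folded image of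
the interval. -/
def Suspicious (p q : Fin P.n) : Prop :=
  p ≤ q ∧
  P.foldMap (P.pt (p : ℕ)) ∉ P.foldMap '' Set.Icc (P.c p) (P.c q) ∧
  P.foldMap (P.pt ((q : ℕ) + 2)) ∉ P.foldMap '' Set.Icc (P.c p) (P.c q)

/-- Number of mountain creases in the closed interval `[c p, c q]`
(`a i = true` means crease `i` is a mountain). -/
def countM (a : Fin P.n → Bool) (p q : Fin P.n) : ℕ :=
  ((univ : Finset (Fin P.n)).filter fun i => p ≤ i ∧ i ≤ q ∧ a i = true).card

/-- Number of valley creases in the closed interval `[c p, c q]`. -/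
def countV (a : Fin P.n → Bool) (p q : Fin P.n) : ℕ :=
  ((univ : Finset (Fin P.n)).filter fun i => p ≤ i ∧ i ≤ q ∧ a i = false).card

/-- An interval is *innocent* if its mountain and valley counts differ by at
most one. -/
def Innocent (a : Fin P.n → Bool) (p q : Fin P.n) : Prop :=
  (P.countM a p q : ℤ) - P.countV a p q ≤ 1 ∧
  (P.countV a p q : ℤ) - P.countM a p q ≤ 1

/-- Every suspicious interval is innocent. -/
def AllInnocent (a : Fin P.n → Bool) : Prop :=
  ∀ p q : Fin P.n, P.Suspicious p q → P.Innocent a p q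

end CreasePattern1D

namespace CreasePattern1D

variable (P : CreasePattern1D)

/-- The segment between the consecutive creases `c i` and `c (i+1)` is
*crimpable* if the two creases have opposite assignments and the segment is
nonstrictly shorter than both of its neighboring segments (its flaps). -/
def Crimpable (a : Fin P.n → Bool) (i : Fin P.n) : Prop :=
  ∃ h : (i : ℕ) + 1 < P.n,
    a i ≠ a ⟨(i : ℕ) + 1, h⟩ ∧
    P.c ⟨(i : ℕ) + 1, h⟩ - P.c i ≤ P.c i - P.pt (i : ℕ) ∧
    P.c ⟨(i : ℕ) + 1, h⟩ - P.c i ≤ P.pt ((i : ℕ) + 3) - P.c ⟨(i : ℕ) + 1, h⟩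

/-- The leftmost segment `[0, c 0]` is *end-foldable*: it is nonstrictly
shorter than the following segment. -/
def EndFoldableLeft : Prop :=
  ∃ h : 0 < P.n, P.c ⟨0, h⟩ - 0 ≤ P.pt 2 - P.c ⟨0, h⟩

/-- The rightmost segment `[c (n-1), L]` is *end-foldable*: it is nonstrictly
shorter than the preceding segment. -/
def EndFoldableRight : Prop :=
  ∃ h : 0 < P.n,
    P.L - P.c ⟨P.n - 1, by omega⟩ ≤ P.c ⟨P.n - 1, by omega⟩ - P.pt (P.n - 1)

/-- Some end segment is end-foldable. -/
def EndFoldable : Prop := P.EndFoldableLeft ∨ P.EndFoldableRight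

end CreasePattern1D

namespace CreasePattern1D

variable (P : CreasePattern1D)

noncomputable def kk (x : ℝ) : ℕ :=
  ((univ : Finset (Fin P.n)).filter fun i => P.c i ≤ x).card

noncomputable def cc (m : ℕ) : ℝ := if h : m < P.n then P.c ⟨m, h⟩ else 0

lemma kk_le (x : ℝ) : P.kk x ≤ P.n := by
  classical
  have := Finset.card_filter_le (univ : Finset (Fin P.n)) (fun i => P.c i ≤ x)
  simpa [kk] using this

lemma mem_ksetP {x : ℝ} {i : Fin P.n} : P.c i ≤ x ↔ (i : ℕ) < P.kk x := by
  classical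
  set S := (univ : Finset (Fin P.n)).filter fun j => P.c j ≤ x with hS
  have hk : P.kk x = S.card := rfl
  have hdc : ∀ ⦃j j' : Fin P.n⦄, j' ≤ j → j ∈ S → j' ∈ S := by
    intro j j' hle hj
    simp only [hS, mem_filter, mem_univ, true_and] at hj ⊢
    exact le_trans (P.mono.monotone hle) hj
  constructor
  · intro hci
    by_contra hlt
    push_neg at hlt
    have hsub : Finset.Iic i ⊆ S := by
      intro j hj
      exact hdc (Finset.mem_Iic.mp hj) (by simp [hS, hci])
    have hcard := Finset.card_le_card hsub
    rw [Fin.card_Iic] at hcard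
    omega
  · intro hlt
    by_contra hci
    have hsub : S ⊆ Finset.Iio i := by
      intro j hj
      simp only [hS, mem_filter, mem_univ, true_and] at hj
      rw [Finset.mem_Iio]
      by_contra h'
      push_neg at h'
      exact hci (le_trans (P.mono.monotone h') hj)
    have hcard := Finset.card_le_card hsub
    rw [Fin.card_Iio] at hcard
    omega

lemma map_kset (x : ℝ) :
    ((univ : Finset (Fin P.n)).filter fun i => P.c i ≤ x).map Fin.valEmbedding
      = Finset.range (P.kk x) := by
  ext m
  simp only [Finset.mem_map, Finset.mem_filter, Finset.mem_range,
    Fin.valEmbedding_apply, mem_univ, true_and]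
  constructor
  · rintro ⟨i, hi, rfl⟩; exact P.mem_ksetP.mp hi
  · intro hm
    have hmn : m < P.n := lt_of_lt_of_le hm (P.kk_le x)
    exact ⟨⟨m, hmn⟩, P.mem_ksetP.mpr hm, rfl⟩

lemma foldMap_eq (x : ℝ) :
    P.foldMap x = (-1 : ℝ) ^ (P.kk x) * x
      + 2 * ∑ m ∈ Finset.range (P.kk x), (-1 : ℝ) ^ m * P.cc m := by
  classical
  rw [foldMap]
  congr 1
  congr 1
  have h1 : ∀ i ∈ (univ : Finset (Fin P.n)).filter fun i => P.c i ≤ x,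
      (-1 : ℝ) ^ (i : ℕ) * P.c i
        = (fun m => (-1 : ℝ) ^ m * P.cc m) (Fin.valEmbedding i) := by
    intro i _
    simp [cc, i.isLt]
  rw [Finset.sum_congr rfl h1, ← Finset.sum_map _ Fin.valEmbedding (fun m => (-1 : ℝ) ^ m * P.cc m), map_kset]

lemma pt_nonneg (hQ : 0 < P.n) (j : ℕ) : 0 ≤ P.pt j := by
  rw [pt]
  split
  · exact le_rfl
  · split
    · exact (P.pos _).le
    · exact le_trans (P.pos ⟨0, hQ⟩).le (P.lt_len ⟨0, hQ⟩).le

lemma pt_le_L (hQ : 0 < P.n) (j : ℕ) : P.pt j ≤ P.L := by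
  rw [pt]
  split
  · exact le_trans (P.pos ⟨0, hQ⟩).le (P.lt_len ⟨0, hQ⟩).le
  · split
    · exact (P.lt_len _).le
    · exact le_rfl

end CreasePattern1D

namespace CreasePattern1D

lemma auxA {P P' : CreasePattern1D} (hn : P'.n = P.n - 1) (j : Fin P'.n) :
    (j : ℕ) + 1 < P.n := by have := j.isLt; omega

lemma auxB {P P' : CreasePattern1D} (hn : P'.n = P.n - 1) (j : Fin P'.n) :
    (j : ℕ) < P.n := by have := j.isLt; omega

lemma auxC {P : CreasePattern1D} (h0 : 0 < P.n) : P.n - 1 < P.n := by omega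

lemma foldMap_left (P P' : CreasePattern1D) (h0 : 0 < P.n) (hn : P'.n = P.n - 1)
    (hc : ∀ j : Fin P'.n, P'.c j = P.c ⟨(j : ℕ) + 1, auxA hn j⟩ - P.c ⟨0, h0⟩)
    {y : ℝ} (hy : 0 ≤ y) :
    P'.foldMap y = P.c ⟨0, h0⟩ - P.foldMap (y + P.c ⟨0, h0⟩) := by
  classical
  set c0 := P.c ⟨0, h0⟩ with hc0
  set x := y + c0 with hx
  set k := P.kk x with hkdef
  set k' := P'.kk y with hk'def
  have h0mem : (0 : ℕ) < k := by
    have : P.c ⟨0, h0⟩ ≤ x := by rw [hx]; linarith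
    simpa using P.mem_ksetP.mp this
  have hkle := P.kk_le x
  have hk'le := P'.kk_le y
  have hiff : ∀ j : Fin P'.n, ((j : ℕ) < k' ↔ (j : ℕ) + 1 < k) := by
    intro j
    have hjlt : (j : ℕ) + 1 < P.n := by have := j.isLt; omega
    constructor
    · intro hj
      have hcj : P'.c j ≤ y := P'.mem_ksetP.mpr hj
      rw [hc j] at hcj
      have : P.c ⟨(j : ℕ) + 1, hjlt⟩ ≤ x := by rw [hx]; linarith
      exact P.mem_ksetP.mp this
    · intro hj
      have : P.c ⟨(j : ℕ) + 1, hjlt⟩ ≤ x := P.mem_ksetP.mpr hj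
      have hcj : P'.c j ≤ y := by rw [hc j]; rw [hx] at this; linarith
      exact P'.mem_ksetP.mp hcj
  have hkk : k = k' + 1 := by
    rcases lt_trichotomy k' (k - 1) with hlt | heq | hgt
    · exfalso
      have hjn : k' < P'.n := by omega
      have := (hiff ⟨k', hjn⟩).mpr (by simpa using by omega)
      simp at this
    · omega
    · exfalso
      have hjn : k - 1 < P'.n := by omega
      have := (hiff ⟨k - 1, hjn⟩).mp (by simpa using by omega)
      simp at this
      omega
  have hcc : ∀ m < k', P'.cc m = P.cc (m + 1) - c0 := by
    intro m hm
    have hm' : m < P'.n := lt_of_lt_of_le hm hk'le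
    have hm2 : m + 1 < P.n := by omega
    have := hc ⟨m, hm'⟩
    simp only [cc, dif_pos hm', dif_pos hm2]
    simpa using this
  have hcc0 : P.cc 0 = c0 := by simp [cc, h0, hc0]
  rw [P'.foldMap_eq, P.foldMap_eq, ← hkdef, ← hk'def, hkk]
  rw [Finset.sum_range_succ']
  simp only [pow_zero, one_mul, hcc0]
  have hsplit : ∑ m ∈ range k', (-1 : ℝ) ^ m * P'.cc m
      = (∑ m ∈ range k', (-1 : ℝ) ^ m * P.cc (m + 1))
        - c0 * ∑ m ∈ range k', (-1 : ℝ) ^ m := by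
    rw [Finset.mul_sum, ← Finset.sum_sub_distrib]
    refine Finset.sum_congr rfl fun m hm => ?_
    rw [hcc m (Finset.mem_range.mp hm)]; ring
  have hneg : ∑ m ∈ range k', (-1 : ℝ) ^ (m + 1) * P.cc (m + 1)
      = - ∑ m ∈ range k', (-1 : ℝ) ^ m * P.cc (m + 1) := by
    rw [← Finset.sum_neg_distrib]
    refine Finset.sum_congr rfl fun m hm => ?_
    rw [pow_succ]; ring
  have hB : ∑ m ∈ range k', (-1 : ℝ) ^ m = ((-1 : ℝ) ^ k' - 1) / (-1 - 1) := by
    simpa using geom_sum_eq (by norm_num : (-1 : ℝ) ≠ 1) k'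
  rw [hsplit, hneg, hB, pow_succ, hx]
  ring
end CreasePattern1D

namespace CreasePattern1D

lemma foldMap_right (P P' : CreasePattern1D) (h0 : 0 < P.n) (hn : P'.n = P.n - 1)
    (hc : ∀ j : Fin P'.n, P'.c j = P.c ⟨(j : ℕ), auxB hn j⟩)
    {y : ℝ} (hy : y ≤ P.c ⟨P.n - 1, auxC h0⟩) :
    P'.foldMap y = P.foldMap y := by
  classical
  set k := P.kk y with hkdef
  set k' := P'.kk y with hk'def
  have hkle := P.kk_le y
  have hk'le := P'.kk_le y
  have hiff : ∀ j : Fin P'.n, ((j : ℕ) < k' ↔ (j : ℕ) < k) := by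
    intro j
    have hjlt : (j : ℕ) < P.n := by have := j.isLt; omega
    constructor
    · intro hj
      have hcj : P'.c j ≤ y := P'.mem_ksetP.mpr hj
      rw [hc j] at hcj
      exact P.mem_ksetP.mp hcj
    · intro hj
      have : P.c ⟨(j : ℕ), hjlt⟩ ≤ y := P.mem_ksetP.mpr hj
      have hcj : P'.c j ≤ y := by rw [hc j]; exact this
      exact P'.mem_ksetP.mp hcj
  have hccm : ∀ m < P'.n, P'.cc m = P.cc m := by
    intro m hm
    have hm2 : m < P.n := by omega
    simp only [cc, dif_pos hm, dif_pos hm2]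
    simpa using hc ⟨m, hm⟩
  rw [P'.foldMap_eq, P.foldMap_eq, ← hkdef, ← hk'def]
  by_cases hcase : k ≤ P'.n
  · have hkk : k' = k := by
      rcases lt_trichotomy k' k with hlt | heq | hgt
      · exfalso
        have hjn : k' < P'.n := by omega
        have := (hiff ⟨k', hjn⟩).mpr (by simpa using hlt)
        simp at this
      · exact heq
      · exfalso
        have hjn : k < P'.n := by omega
        have := (hiff ⟨k, hjn⟩).mp (by simpa using hgt)
        simp at this
    rw [hkk]
    congr 1
    congr 1
    refine Finset.sum_congr rfl fun m hm => ?_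
    rw [hccm m (by have := Finset.mem_range.mp hm; omega)]
  · -- k = P.n, so y = c (n-1)
    have hkn : k = P.n := by omega
    have hk'n : k' = P'.n := by
      rcases lt_or_eq_of_le hk'le with hlt | heq
      · exfalso
        have := (hiff ⟨k', hlt⟩).mpr (by simp; omega)
        simp at this
      · exact heq
    have hge : P.c ⟨P.n - 1, by omega⟩ ≤ y := P.mem_ksetP.mpr (by simp; omega)
    have hyy : y = P.c ⟨P.n - 1, by omega⟩ := le_antisymm hy hge
    have hnn : P.n = P'.n + 1 := by omega
    have hccn : P.cc P'.n = y := by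
      rw [hyy]
      simp only [cc]
      rw [dif_pos (by omega : P'.n < P.n)]
      congr 1
      simp only [Fin.mk.injEq]; omega
    rw [hkn, hk'n, hnn, Finset.sum_range_succ, hccn, pow_succ]
    have hsum : ∑ m ∈ range P'.n, (-1 : ℝ) ^ m * P'.cc m
        = ∑ m ∈ range P'.n, (-1 : ℝ) ^ m * P.cc m := by
      refine Finset.sum_congr rfl fun m hm => ?_
      rw [hccm m (Finset.mem_range.mp hm)]
    rw [hsum]
    ring

end CreasePattern1D

namespace CreasePattern1D

lemma pt_left (P P' : CreasePattern1D) (h0 : 0 < P.n) (hn : P'.n = P.n - 1)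
    (hL : P'.L = P.L - P.c ⟨0, h0⟩)
    (hc : ∀ j : Fin P'.n, P'.c j = P.c ⟨(j : ℕ) + 1, auxA hn j⟩ - P.c ⟨0, h0⟩)
    (j : ℕ) : P'.pt j = P.pt (j + 1) - P.c ⟨0, h0⟩ := by
  rcases Nat.eq_zero_or_pos j with rfl | hj
  · rw [pt, pt, if_pos rfl, if_neg (by omega), dif_pos (by omega : 1 - 1 < P.n)]
    simp
  · rw [pt, pt, if_neg (by omega), if_neg (by omega)]
    by_cases hjn : j - 1 < P'.n
    · rw [dif_pos hjn, dif_pos (by omega : j + 1 - 1 < P.n), hc ⟨j - 1, hjn⟩]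
      congr 2
      simp only [Fin.mk.injEq]
      omega
    · rw [dif_neg hjn, dif_neg (by omega), hL]

lemma pt_right (P P' : CreasePattern1D) (h0 : 0 < P.n) (hn : P'.n = P.n - 1)
    (hL : P'.L = P.c ⟨P.n - 1, auxC h0⟩)
    (hc : ∀ j : Fin P'.n, P'.c j = P.c ⟨(j : ℕ), auxB hn j⟩)
    (j : ℕ) (hjle : j ≤ P.n) : P'.pt j = P.pt j := by
  rcases Nat.eq_zero_or_pos j with rfl | hj
  · rw [pt, pt, if_pos rfl, if_pos rfl]
  · rw [pt, pt, if_neg (by omega), if_neg (by omega)]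
    by_cases hjn : j - 1 < P'.n
    · rw [dif_pos hjn, dif_pos (by omega : j - 1 < P.n), hc ⟨j - 1, hjn⟩]
    · rw [dif_neg hjn, dif_pos (by omega : j - 1 < P.n), hL]
      congr 1
      simp only [Fin.mk.injEq]
      omega

lemma count_shift {n n' : ℕ} (s : ℕ) (f : Fin n → Bool) (f' : Fin n' → Bool)
    (p q : Fin n') (p₁ q₁ : Fin n) (hp : (p₁ : ℕ) = (p : ℕ) + s) (hq : (q₁ : ℕ) = (q : ℕ) + s)
    (hf : ∀ j : Fin n', ∀ hj : (j : ℕ) + s < n, f' j = f ⟨(j : ℕ) + s, hj⟩)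
    (hqn : (q : ℕ) + s < n) (b : Bool) :
    ((univ : Finset (Fin n')).filter fun i => p ≤ i ∧ i ≤ q ∧ f' i = b).card
      = ((univ : Finset (Fin n)).filter fun i => p₁ ≤ i ∧ i ≤ q₁ ∧ f i = b).card := by
  classical
  refine Finset.card_bij'
    (fun i hi => (⟨(i : ℕ) + s, ?_⟩ : Fin n))
    (fun i hi => (⟨(i : ℕ) - s, ?_⟩ : Fin n')) ?_ ?_ ?_ ?_
  · simp only [mem_filter, mem_univ, true_and] at hi
    have hle : (i : ℕ) ≤ (q : ℕ) := hi.2.1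
    omega
  · simp only [mem_filter, mem_univ, true_and] at hi
    have h1 : (p₁ : ℕ) ≤ (i : ℕ) := hi.1
    have h2 : (i : ℕ) ≤ (q₁ : ℕ) := hi.2.1
    have := q.isLt
    omega
  · intro i hi
    simp only [mem_filter, mem_univ, true_and] at hi ⊢
    have h1 : (p : ℕ) ≤ (i : ℕ) := hi.1
    have h2 : (i : ℕ) ≤ (q : ℕ) := hi.2.1
    refine ⟨by rw [Fin.le_def]; simp; omega, by rw [Fin.le_def]; simp; omega, ?_⟩
    rw [← hf i (by omega)]
    exact hi.2.2
  · intro i hi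
    simp only [mem_filter, mem_univ, true_and] at hi ⊢
    have h1 : (p₁ : ℕ) ≤ (i : ℕ) := hi.1
    have h2 : (i : ℕ) ≤ (q₁ : ℕ) := hi.2.1
    refine ⟨by rw [Fin.le_def]; simp; omega, by rw [Fin.le_def]; simp; omega, ?_⟩
    have hieq : ((⟨(i : ℕ) - s, by have := q.isLt; omega⟩ : Fin n') : ℕ) + s < n := by
      have := i.isLt; simp only [Fin.val_mk]; omega
    rw [hf _ hieq]
    have : (⟨((⟨(i : ℕ) - s, by have := q.isLt; omega⟩ : Fin n') : ℕ) + s, hieq⟩ : Fin n) = i := by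
      refine Fin.ext ?_; simp only [Fin.val_mk]; omega
    rw [this]
    exact hi.2.2
  · intro i hi
    simp only [mem_filter, mem_univ, true_and] at hi
    refine Fin.ext ?_
    simp only [Fin.val_mk]
    omega
  · intro i hi
    simp only [mem_filter, mem_univ, true_and] at hi
    have h1 : (p₁ : ℕ) ≤ (i : ℕ) := Fin.le_def.mp hi.1
    refine Fin.ext ?_
    simp only [Fin.val_mk]
    omega

end CreasePattern1D

open CreasePattern1D in
/-- An end fold preserves that every suspicious interval is
innocent.  Here `P'` (with assignment `a'`) is the result of performing an end
fold on `P`: either the leftmost segment together with the leftmost crease is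
deleted (and coordinates shift so the paper again starts at `0`), or the
rightmost segment together with the rightmost crease is deleted. -/
theorem endfold_preserves_allInnocent (P P' : CreasePattern1D)
    (a : Fin P.n → Bool) (a' : Fin P'.n → Bool)
    (h0 : 0 < P.n)
    (hn : P'.n = P.n - 1)
    (hfold :
      (P.EndFoldableLeft ∧
        P'.L = P.L - P.c ⟨0, h0⟩ ∧
        (∀ j : Fin P'.n,
          P'.c j = P.c ⟨(j : ℕ) + 1, by have := j.isLt; omega⟩ - P.c ⟨0, h0⟩ ∧
          a' j = a ⟨(j : ℕ) + 1, by have := j.isLt; omega⟩)) ∨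
      (P.EndFoldableRight ∧
        P'.L = P.c ⟨P.n - 1, by omega⟩ ∧
        (∀ j : Fin P'.n,
          P'.c j = P.c ⟨(j : ℕ), by have := j.isLt; omega⟩ ∧
          a' j = a ⟨(j : ℕ), by have := j.isLt; omega⟩)))
    (h : P.AllInnocent a) :
    P'.AllInnocent a' := by
  intro p q hsusp
  obtain ⟨hpq, hout1, hout2⟩ := hsusp
  have hn'pos : 0 < P'.n := p.pos
  rcases hfold with ⟨-, hL, hca⟩ | ⟨-, hL, hca⟩
  · -- Left end fold
    have hc : ∀ j : Fin P'.n,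
        P'.c j = P.c ⟨(j : ℕ) + 1, by have := j.isLt; omega⟩ - P.c ⟨0, h0⟩ :=
      fun j => (hca j).1
    have hp1 : (p : ℕ) + 1 < P.n := by have := p.isLt; omega
    have hq1 : (q : ℕ) + 1 < P.n := by have := q.isLt; omega
    set p₁ : Fin P.n := ⟨(p : ℕ) + 1, hp1⟩ with hp₁
    set q₁ : Fin P.n := ⟨(q : ℕ) + 1, hq1⟩ with hq₁
    have hpt := P.pt_left P' h0 hn hL hc
    have himg : ∀ w : ℝ, 0 ≤ w →
        P.foldMap (w + P.c ⟨0, h0⟩) ∈ P.foldMap '' Set.Icc (P.c p₁) (P.c q₁) →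
        P'.foldMap w ∈ P'.foldMap '' Set.Icc (P'.c p) (P'.c q) := by
      intro w hw hmem
      obtain ⟨t, ht, heq⟩ := hmem
      have hc0p : P.c ⟨0, h0⟩ ≤ P.c p₁ :=
        P.mono.monotone (by rw [hp₁]; simp [Fin.le_def])
      have hc0t : P.c ⟨0, h0⟩ ≤ t := le_trans hc0p ht.1
      refine ⟨t - P.c ⟨0, h0⟩, ⟨?_, ?_⟩, ?_⟩
      · rw [hc p]; exact sub_le_sub_right ht.1 _
      · rw [hc q]; exact sub_le_sub_right ht.2 _
      · rw [P.foldMap_left P' h0 hn hc (by linarith : (0:ℝ) ≤ t - P.c ⟨0, h0⟩)]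
        have e1 : t - P.c ⟨0, h0⟩ + P.c ⟨0, h0⟩ = t := by ring
        rw [e1, heq, P.foldMap_left P' h0 hn hc hw]
    have hsusp1 : P.Suspicious p₁ q₁ := by
      refine ⟨?_, ?_, ?_⟩
      · rw [Fin.le_def]
        have h' := Fin.le_def.mp hpq
        simp only [hp₁, hq₁, Fin.val_mk]
        omega
      · intro hmem
        apply hout1
        have hw : (0:ℝ) ≤ P'.pt (p : ℕ) := P'.pt_nonneg hn'pos _
        have hweq : P'.pt (p : ℕ) + P.c ⟨0, h0⟩ = P.pt ((p₁ : ℕ)) := by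
          have h1 := hpt (p : ℕ)
          have e : (p₁ : ℕ) = (p : ℕ) + 1 := rfl
          rw [e]
          linarith
        exact himg (P'.pt (p : ℕ)) hw (by rw [hweq]; exact hmem)
      · intro hmem
        apply hout2
        have hw : (0:ℝ) ≤ P'.pt ((q : ℕ) + 2) := P'.pt_nonneg hn'pos _
        have hweq : P'.pt ((q : ℕ) + 2) + P.c ⟨0, h0⟩ = P.pt ((q₁ : ℕ) + 2) := by
          have h1 := hpt ((q : ℕ) + 2)
          have e : (q₁ : ℕ) + 2 = (q : ℕ) + 2 + 1 := by
            simp only [hq₁, Fin.val_mk]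
          rw [e]
          linarith
        exact himg (P'.pt ((q : ℕ) + 2)) hw (by rw [hweq]; exact hmem)
    obtain ⟨h1, h2⟩ := h p₁ q₁ hsusp1
    have hf : ∀ j : Fin P'.n, ∀ hj : (j : ℕ) + 1 < P.n, a' j = a ⟨(j : ℕ) + 1, hj⟩ := by
      intro j hj; exact (hca j).2
    have hpv : (p₁ : ℕ) = (p : ℕ) + 1 := rfl
    have hqv : (q₁ : ℕ) = (q : ℕ) + 1 := rfl
    have eM : P'.countM a' p q = P.countM a p₁ q₁ :=
      count_shift 1 a a' p q p₁ q₁ hpv hqv hf hq1 true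
    have eV : P'.countV a' p q = P.countV a p₁ q₁ :=
      count_shift 1 a a' p q p₁ q₁ hpv hqv hf hq1 false
    exact ⟨by rw [eM, eV]; exact h1, by rw [eM, eV]; exact h2⟩
  · -- Right end fold
    have hc : ∀ j : Fin P'.n,
        P'.c j = P.c ⟨(j : ℕ), by have := j.isLt; omega⟩ := fun j => (hca j).1
    have hp1 : (p : ℕ) < P.n := by have := p.isLt; omega
    have hq1 : (q : ℕ) < P.n := by have := q.isLt; omega
    set p₁ : Fin P.n := ⟨(p : ℕ), hp1⟩ with hp₁
    set q₁ : Fin P.n := ⟨(q : ℕ), hq1⟩ with hq₁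
    have hcq : P.c q₁ ≤ P.c ⟨P.n - 1, by omega⟩ :=
      P.mono.monotone (by rw [hq₁, Fin.le_def]; simp only [Fin.val_mk]; omega)
    have himg : ∀ w : ℝ, w ≤ P.c ⟨P.n - 1, by omega⟩ →
        P.foldMap w ∈ P.foldMap '' Set.Icc (P.c p₁) (P.c q₁) →
        P'.foldMap w ∈ P'.foldMap '' Set.Icc (P'.c p) (P'.c q) := by
      intro w hw hmem
      obtain ⟨t, ht, heq⟩ := hmem
      have hct : t ≤ P.c ⟨P.n - 1, by omega⟩ := le_trans ht.2 hcq
      refine ⟨t, ⟨?_, ?_⟩, ?_⟩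
      · rw [hc p]; exact ht.1
      · rw [hc q]; exact ht.2
      · rw [P.foldMap_right P' h0 hn hc hct, heq, P.foldMap_right P' h0 hn hc hw]
    have hLc : P'.L = P.c ⟨P.n - 1, by omega⟩ := hL
    have hsusp1 : P.Suspicious p₁ q₁ := by
      refine ⟨?_, ?_, ?_⟩
      · rw [Fin.le_def]
        have h' := Fin.le_def.mp hpq
        simp only [hp₁, hq₁, Fin.val_mk]
        omega
      · intro hmem
        apply hout1
        have hw : P'.pt (p : ℕ) ≤ P.c ⟨P.n - 1, by omega⟩ := by
          rw [← hLc]; exact P'.pt_le_L hn'pos _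
        have hweq : P'.pt (p : ℕ) = P.pt ((p₁ : ℕ)) :=
          P.pt_right P' h0 hn hLc hc (p : ℕ) (by omega)
        exact himg (P'.pt (p : ℕ)) hw (by rw [hweq]; exact hmem)
      · intro hmem
        apply hout2
        have hw : P'.pt ((q : ℕ) + 2) ≤ P.c ⟨P.n - 1, by omega⟩ := by
          rw [← hLc]; exact P'.pt_le_L hn'pos _
        have hweq : P'.pt ((q : ℕ) + 2) = P.pt ((q₁ : ℕ) + 2) :=
          P.pt_right P' h0 hn hLc hc ((q : ℕ) + 2) (by have := q.isLt; omega)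
        exact himg (P'.pt ((q : ℕ) + 2)) hw (by rw [hweq]; exact hmem)
    obtain ⟨h1, h2⟩ := h p₁ q₁ hsusp1
    have hf : ∀ j : Fin P'.n, ∀ hj : (j : ℕ) + 0 < P.n, a' j = a ⟨(j : ℕ) + 0, hj⟩ := by
      intro j hj; exact (hca j).2
    have hpv : (p₁ : ℕ) = (p : ℕ) + 0 := rfl
    have hqv : (q₁ : ℕ) = (q : ℕ) + 0 := rfl
    have eM : P'.countM a' p q = P.countM a p₁ q₁ :=
      count_shift 0 a a' p q p₁ q₁ hpv hqv hf (by omega) true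
    have eV : P'.countV a' p q = P.countV a p₁ q₁ :=
      count_shift 0 a a' p q p₁ q₁ hpv hqv hf (by omega) false
    exact ⟨by rw [eM, eV]; exact h1, by rw [eM, eV]; exact h2⟩
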